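/- Let T be an ORB-tree with covariance matrix S and let v be an internal node. The Haar-like wavelet φ_v is an eigenvector of S if and only if T is trace-balanced at v, i.e., ℓ*(i,v) = ℓ*(j,v) for all leaves i, j descending from v; in that case the eigenvalue is ℓ*(i,v) for any leaf i ∈ L(v). -/
import Mathlib


open Finset

noncomputable section
open scoped Classical

/-- A finite rooted tree on vertices `Fin n`, given by a parent function:
every vertex reaches the root by iterating `parent`, and the root is its own parent. -/
structure RTree where
  n : ℕ
  npos : 0 < n
  root : Fin n
  parent : Fin n → Fin n
  parent_root : parent root = root
  reach : ∀ v, ∃ k, parent^[k] v = root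

namespace RTree

variable (T : RTree)

/-- `u` is an ancestor of `v` (every vertex is an ancestor of itself). -/
def Anc (u v : Fin T.n) : Prop := ∃ k, T.parent^[k] v = u

/-- The children of a vertex. -/
def children (v : Fin T.n) : Finset (Fin T.n) :=
  Finset.univ.filter fun u => T.parent u = v ∧ u ≠ T.root

def IsLeaf (v : Fin T.n) : Prop := T.children v = ∅

/-- The leaf set of the tree. -/
def leaves : Finset (Fin T.n) := Finset.univ.filter fun v => T.IsLeaf v

/-- The internal (non-leaf) vertices; the root is internal. -/
def internal : Finset (Fin T.n) := Finset.univ.filter fun v => ¬ T.IsLeaf v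

/-- `L(v)`: the leaves descending from `v`. -/
def Ldesc (v : Fin T.n) : Finset (Fin T.n) := T.leaves.filter fun i => T.Anc v i

/-- Depth of a vertex: number of edges to the root. -/
def depth (v : Fin T.n) : ℕ := Nat.find (T.reach v)

/-- Number of vertices of the subtree rooted at `v`. -/
def subtreeSize (v : Fin T.n) : ℕ := (Finset.univ.filter fun u => T.Anc v u).card

/-- ORB-tree: the root has exactly one child and is not a leaf, and every other
internal vertex has exactly two children (so every vertex has degree 1 or 3). -/
def IsORB : Prop :=
  ¬ T.IsLeaf T.root ∧ (T.children T.root).card = 1 ∧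
  ∀ v, ¬ T.IsLeaf v → v ≠ T.root → (T.children v).card = 2

/-- The type of leaves. -/
abbrev Leaf := {i // i ∈ T.leaves}

/-- `δ_e` for the edge `e` above vertex `v`: the indicator vector of the leaves
descending from that edge. -/
def delta (v : Fin T.n) : T.Leaf → ℝ := fun i => if T.Anc v i.1 then 1 else 0

/-- The covariance matrix of the tree with branch lengths `ℓ`
(`ℓ v` is the length of the edge joining `v` to its parent):
`S = ∑_{e ∈ E} ℓ(e) δ_e δ_e'`.  Equivalently `S(i,j) = ∑_{e ∈ [i∧j,∘]} ℓ(e)`. -/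
def cov (ℓ : Fin T.n → ℝ) : Matrix T.Leaf T.Leaf ℝ :=
  ∑ v ∈ Finset.univ.filter (fun v => v ≠ T.root),
    ℓ v • Matrix.vecMulVec (T.delta v) (T.delta v)

/-- The trace branch length `ℓ*(i,v) = ∑_{e ∈ [i,v]} |L(e)| ℓ(e)`; the edge above `w`
lies on the path between `i` and `v` iff exactly one of `i`, `v` descends from `w`. -/
def lstar (ℓ : Fin T.n → ℝ) (i v : Fin T.n) : ℝ :=
  ∑ w ∈ Finset.univ.filter (fun w => w ≠ T.root ∧
      ((T.Anc w i ∧ ¬ T.Anc w v) ∨ (T.Anc w v ∧ ¬ T.Anc w i))),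
    ((T.Ldesc w).card : ℝ) * ℓ w

/-- `φ` is the family of Haar-like wavelets of `T`, indexed by internal vertices. -/
def IsHaarLike (φ : Fin T.n → T.Leaf → ℝ) : Prop :=
  (∀ i, φ T.root i = 1 / Real.sqrt ((T.leaves.card : ℝ))) ∧
  ∀ v ∈ T.internal, v ≠ T.root → ∃ c₀ c₁, c₀ ≠ c₁ ∧ T.children v = {c₀, c₁} ∧
    ∀ i : T.Leaf, φ v i =
      if i.1 ∈ T.Ldesc c₀ then
        Real.sqrt (((T.Ldesc c₁).card : ℝ) / (((T.Ldesc c₀).card : ℝ) * ((T.Ldesc v).card : ℝ)))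
      else if i.1 ∈ T.Ldesc c₁ then
        - Real.sqrt (((T.Ldesc c₀).card : ℝ) / (((T.Ldesc c₁).card : ℝ) * ((T.Ldesc v).card : ℝ)))
      else 0

/-- `T` is trace-balanced (at every non-root internal vertex). -/
def TraceBalanced (ℓ : Fin T.n → ℝ) : Prop :=
  ∀ v ∈ T.internal, v ≠ T.root → ∀ i ∈ T.Ldesc v, ∀ j ∈ T.Ldesc v,
    T.lstar ℓ i v = T.lstar ℓ j v

end RTree

namespace RTree

variable (T : RTree)

-- basic lemmas
lemma iterate_root (k : ℕ) : T.parent^[k] T.root = T.root := by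
  induction k with
  | zero => rfl
  | succ k ih => rw [Function.iterate_succ_apply', ih, T.parent_root]

lemma anc_refl (v : Fin T.n) : T.Anc v v := ⟨0, rfl⟩

lemma anc_trans {u v w : Fin T.n} (h1 : T.Anc u v) (h2 : T.Anc v w) : T.Anc u w := by
  obtain ⟨k, hk⟩ := h1; obtain ⟨m, hm⟩ := h2
  exact ⟨k + m, by rw [Function.iterate_add_apply, hm, hk]⟩

lemma anc_root (v : Fin T.n) : T.Anc T.root v := T.reach v

lemma anc_root_iff {w : Fin T.n} : T.Anc w T.root ↔ w = T.root := by
  constructor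
  · rintro ⟨k, hk⟩; rw [T.iterate_root] at hk; exact hk.symm
  · rintro rfl; exact T.anc_refl _

lemma anc_antisymm {u v : Fin T.n} (h1 : T.Anc u v) (h2 : T.Anc v u) : u = v := by
  obtain ⟨k, hk⟩ := h1; obtain ⟨m, hm⟩ := h2
  rcases Nat.eq_zero_or_pos (m + k) with h | h
  · have hk0 : k = 0 := by omega
    rw [hk0] at hk; exact hk.symm
  · have hcyc : T.parent^[m + k] v = v := by rw [Function.iterate_add_apply, hk, hm]
    have hrep : ∀ j, T.parent^[j * (m + k)] v = v := by
      intro j; induction j with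
      | zero => simp
      | succ j ih => rw [Nat.succ_mul, Function.iterate_add_apply, hcyc, ih]
    obtain ⟨K, hK⟩ := T.reach v
    have hKle : K ≤ K * (m + k) := Nat.le_mul_of_pos_right K h
    have hroot : T.parent^[K * (m + k)] v = T.root := by
      have h2' := Function.iterate_add_apply T.parent (K * (m + k) - K) K v
      rw [Nat.sub_add_cancel hKle] at h2'
      rw [h2', hK, T.iterate_root]
    have hv : v = T.root := (hrep K).symm.trans hroot
    subst hv; rw [T.iterate_root] at hk; exact hk.symm

lemma anc_comparable {u w i : Fin T.n} (h1 : T.Anc u i) (h2 : T.Anc w i) :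
    T.Anc u w ∨ T.Anc w u := by
  obtain ⟨k, hk⟩ := h1; obtain ⟨m, hm⟩ := h2
  rcases le_total k m with h | h
  · right; exact ⟨m - k, by rw [← hk, ← Function.iterate_add_apply, Nat.sub_add_cancel h, hm]⟩
  · left; exact ⟨k - m, by rw [← hm, ← Function.iterate_add_apply, Nat.sub_add_cancel h, hk]⟩

lemma mem_children {c v : Fin T.n} : c ∈ T.children v ↔ T.parent c = v ∧ c ≠ T.root := by
  simp [children]

lemma anc_of_child {c v : Fin T.n} (h : c ∈ T.children v) : T.Anc v c :=
  ⟨1, by simpa using (T.mem_children.1 h).1⟩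

lemma parent_fixed {v : Fin T.n} (h : T.parent v = v) : v = T.root := by
  obtain ⟨k, hk⟩ := T.reach v
  have hfix : ∀ j, T.parent^[j] v = v := by
    intro j; induction j with
    | zero => rfl
    | succ j ih => rw [Function.iterate_succ_apply', ih, h]
  rw [hfix k] at hk; exact hk

lemma child_ne {c v : Fin T.n} (h : c ∈ T.children v) : c ≠ v := by
  rintro rfl
  exact (T.mem_children.1 h).2 (T.parent_fixed (T.mem_children.1 h).1)

lemma child_not_anc {c v : Fin T.n} (h : c ∈ T.children v) : ¬ T.Anc c v := fun ha =>
  T.child_ne h (T.anc_antisymm ha (T.anc_of_child h))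

lemma child_ne_root {c v : Fin T.n} (h : c ∈ T.children v) : c ≠ T.root :=
  (T.mem_children.1 h).2

lemma anc_parent_of_ne {c v w : Fin T.n} (hc : c ∈ T.children v) (h : T.Anc w c)
    (hne : w ≠ c) : T.Anc w v := by
  obtain ⟨k, hk⟩ := h
  have hk0 : k ≠ 0 := by rintro rfl; exact hne hk.symm
  have h1 : T.parent^[1] c = v := by simpa using (T.mem_children.1 hc).1
  refine ⟨k - 1, ?_⟩
  rw [← h1, ← Function.iterate_add_apply, Nat.sub_add_cancel (Nat.one_le_iff_ne_zero.2 hk0)]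
  exact hk

lemma exists_child_anc {v i : Fin T.n} (h : T.Anc v i) (hne : i ≠ v) :
    ∃ c ∈ T.children v, T.Anc c i := by
  have hex : ∃ k, T.parent^[k] i = v := h
  have hk : T.parent^[Nat.find hex] i = v := Nat.find_spec hex
  set k := Nat.find hex with hkdef
  have hk0 : k ≠ 0 := by rintro h0; rw [h0] at hk; exact hne hk
  refine ⟨T.parent^[k - 1] i, ?_, ⟨k - 1, rfl⟩⟩
  rw [T.mem_children]
  have hpar : T.parent (T.parent^[k - 1] i) = v := by
    have hh := (Function.iterate_succ_apply' T.parent (k - 1) i).symm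
    rw [hh, Nat.succ_eq_add_one, Nat.sub_add_cancel (Nat.one_le_iff_ne_zero.2 hk0)]
    exact hk
  refine ⟨hpar, ?_⟩
  intro hroot
  have hmin : T.parent^[k - 1] i ≠ v := by
    have := Nat.find_min hex (m := k - 1) (by omega)
    exact this
  have hv : v = T.root := by rw [← hpar, hroot, T.parent_root]
  exact hmin (hroot.trans hv.symm)

lemma mem_Ldesc {i v : Fin T.n} : i ∈ T.Ldesc v ↔ i ∈ T.leaves ∧ T.Anc v i := by
  simp [Ldesc]

lemma Ldesc_subset {u v : Fin T.n} (h : T.Anc u v) : T.Ldesc v ⊆ T.Ldesc u := by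
  intro i hi
  rw [mem_Ldesc] at *
  exact ⟨hi.1, T.anc_trans h hi.2⟩

lemma depth_child {c v : Fin T.n} (h : c ∈ T.children v) : T.depth c = T.depth v + 1 := by
  obtain ⟨hp, hr⟩ := T.mem_children.1 h
  have h1 : T.parent^[T.depth v + 1] c = T.root := by
    rw [Function.iterate_succ_apply, hp]
    exact Nat.find_spec (T.reach v)
  have h2 : T.depth c ≤ T.depth v + 1 := Nat.find_min' (T.reach c) h1
  have h3 : T.depth c ≠ 0 := by
    intro h0
    have hspec := Nat.find_spec (T.reach c)
    rw [show Nat.find (T.reach c) = T.depth c from rfl, h0] at hspec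
    exact hr hspec
  have h4 : T.parent^[T.depth c - 1] v = T.root := by
    have hh : T.parent^[(T.depth c - 1) + 1] c = T.root := by
      rw [Nat.sub_add_cancel (Nat.one_le_iff_ne_zero.2 h3)]
      exact Nat.find_spec (T.reach c)
    rw [Function.iterate_succ_apply, hp] at hh
    exact hh
  have h5 : T.depth v ≤ T.depth c - 1 := Nat.find_min' (T.reach v) h4
  omega

lemma Ldesc_nonempty (v : Fin T.n) : (T.Ldesc v).Nonempty := by
  obtain ⟨u, hu, hmax⟩ := (Finset.univ.filter fun u => T.Anc v u).exists_max_image T.depth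
    ⟨v, by simp [T.anc_refl]⟩
  simp only [mem_filter, mem_univ, true_and] at hu
  refine ⟨u, ?_⟩
  rw [mem_Ldesc]
  refine ⟨?_, hu⟩
  simp only [leaves, mem_filter, mem_univ, true_and]
  by_contra hl
  have hne : (T.children u).Nonempty := Finset.nonempty_iff_ne_empty.2 hl
  obtain ⟨c, hc⟩ := hne
  have hcmem : c ∈ Finset.univ.filter fun u => T.Anc v u := by
    simp only [mem_filter, mem_univ, true_and]
    exact T.anc_trans hu (T.anc_of_child hc)
  have := hmax c hcmem
  rw [T.depth_child hc] at this
  omega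


lemma sum_leaf (f : Fin T.n → ℝ) : ∑ j : T.Leaf, f j.1 = ∑ j ∈ T.leaves, f j :=
  Finset.sum_coe_sort T.leaves f

lemma mulVec_cov (ℓ : Fin T.n → ℝ) (x : T.Leaf → ℝ) (i : T.Leaf) :
    (T.cov ℓ).mulVec x i
      = ∑ w ∈ Finset.univ.filter (· ≠ T.root),
          ℓ w * T.delta w i * (∑ j : T.Leaf, T.delta w j * x j) := by
  unfold Matrix.mulVec dotProduct cov
  simp only [Finset.sum_apply, Matrix.sum_apply, Matrix.smul_apply, Matrix.vecMulVec_apply,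
    smul_eq_mul, Finset.sum_mul, Finset.mul_sum]
  rw [Finset.sum_comm]
  exact Finset.sum_congr rfl fun w _ => Finset.sum_congr rfl fun j _ => by ring

lemma delta_sum (w : Fin T.n) (ψ : Fin T.n → ℝ) (x : T.Leaf → ℝ) (hx : ∀ j, x j = ψ j.1) :
    (∑ j : T.Leaf, T.delta w j * x j) = ∑ j ∈ T.Ldesc w, ψ j := by
  have h1 : ∀ j : T.Leaf, T.delta w j * x j
      = (fun y => (if T.Anc w y then (1:ℝ) else 0) * ψ y) j.1 := by
    intro j; rw [hx]; rfl
  calc ∑ j : T.Leaf, T.delta w j * x j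
      = ∑ j : T.Leaf, (fun y => (if T.Anc w y then (1:ℝ) else 0) * ψ y) j.1 :=
        Finset.sum_congr rfl fun j _ => h1 j
    _ = ∑ j ∈ T.leaves, (if T.Anc w j then (1:ℝ) else 0) * ψ j :=
        T.sum_leaf (fun y => (if T.Anc w y then (1:ℝ) else 0) * ψ y)
    _ = ∑ j ∈ T.Ldesc w, ψ j := by
        rw [Ldesc, Finset.sum_filter]
        exact Finset.sum_congr rfl fun j _ => by by_cases h : T.Anc w j <;> simp [h]

lemma sum_indicator_pair (s A B : Finset (Fin T.n)) (hAB : ∀ x ∈ A, x ∉ B) (c d : ℝ) :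
    (∑ j ∈ s, if j ∈ A then c else if j ∈ B then d else 0)
      = ((s ∩ A).card : ℝ) * c + ((s ∩ B).card : ℝ) * d := by
  rw [← Finset.sum_filter_add_sum_filter_not s (· ∈ A)]
  have h1 : ∑ j ∈ s.filter (· ∈ A), (if j ∈ A then c else if j ∈ B then d else 0)
      = ((s ∩ A).card : ℝ) * c := by
    rw [Finset.sum_congr rfl (g := fun _ => c)
      (fun j hj => if_pos (Finset.mem_filter.1 hj).2), Finset.sum_const,
      Finset.filter_mem_eq_inter, nsmul_eq_mul]
  have hset : (s.filter (fun j => ¬ j ∈ A)).filter (· ∈ B) = s ∩ B := by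
    ext x
    simp only [Finset.mem_filter, Finset.mem_inter]
    constructor
    · rintro ⟨⟨hs, _⟩, hb⟩; exact ⟨hs, hb⟩
    · rintro ⟨hs, hb⟩; exact ⟨⟨hs, fun ha => hAB x ha hb⟩, hb⟩
  have h2 : ∑ j ∈ s.filter (fun j => ¬ j ∈ A), (if j ∈ A then c else if j ∈ B then d else 0)
      = ((s ∩ B).card : ℝ) * d := by
    calc ∑ j ∈ s.filter (fun j => ¬ j ∈ A), (if j ∈ A then c else if j ∈ B then d else 0)
        = ∑ j ∈ s.filter (fun j => ¬ j ∈ A), (if j ∈ B then d else 0) :=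
          Finset.sum_congr rfl fun j hj => if_neg (Finset.mem_filter.1 hj).2
      _ = ∑ j ∈ (s.filter (fun j => ¬ j ∈ A)).filter (· ∈ B), d := (Finset.sum_filter _ _).symm
      _ = ((s ∩ B).card : ℝ) * d := by rw [hset, Finset.sum_const, nsmul_eq_mul]
  rw [h1, h2]

lemma lstar_of_anc {ℓ : Fin T.n → ℝ} {i v : Fin T.n} (h : T.Anc v i) :
    T.lstar ℓ i v = ∑ w ∈ Finset.univ.filter (fun w => T.Anc w i ∧ ¬ T.Anc w v),
      ((T.Ldesc w).card : ℝ) * ℓ w := by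
  unfold lstar
  apply Finset.sum_congr _ fun _ _ => rfl
  ext w
  simp only [mem_filter, mem_univ, true_and]
  constructor
  · rintro ⟨hw, h1 | h2⟩
    · exact h1
    · exact absurd (T.anc_trans h2.1 h) h2.2
  · rintro ⟨h1, h2⟩
    refine ⟨?_, Or.inl ⟨h1, h2⟩⟩
    rintro rfl; exact h2 (T.anc_root v)

lemma children_disjoint {v c₀ c₁ : Fin T.n} (h₀ : c₀ ∈ T.children v) (h₁ : c₁ ∈ T.children v)
    (hne : c₀ ≠ c₁) : ∀ x ∈ T.Ldesc c₀, x ∉ T.Ldesc c₁ := by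
  intro x hx0 hx1
  rw [mem_Ldesc] at hx0 hx1
  rcases T.anc_comparable hx0.2 hx1.2 with h | h
  · exact T.child_not_anc h₀ (T.anc_parent_of_ne h₁ h hne)
  · exact T.child_not_anc h₁ (T.anc_parent_of_ne h₀ h hne.symm)

lemma leaf_ne_internal {v : Fin T.n} (hv : v ∈ T.internal) (i : T.Leaf) : i.1 ≠ v := by
  intro he
  have h1 : T.IsLeaf i.1 := by
    have h : i.1 ∈ Finset.univ.filter (fun u => T.IsLeaf u) := i.2
    exact (Finset.mem_filter.1 h).2
  have h2 : ¬ T.IsLeaf v := by simpa [internal] using hv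
  rw [he] at h1; exact h2 h1

lemma sum_key (v c : Fin T.n) (hc : c ∈ T.children v) (ℓ : Fin T.n → ℝ) (σ : Fin T.n → ℝ)
    (γ : ℝ)
    (hσc : ∀ w, T.Anc c w → σ w = ((T.Ldesc w).card : ℝ) * γ)
    (hσv : ∀ w, T.Anc w v → σ w = 0)
    (i : T.Leaf) (hi : i.1 ∈ T.Ldesc c) :
    ∑ w ∈ Finset.univ.filter (· ≠ T.root), ℓ w * T.delta w i * σ w
      = T.lstar ℓ i.1 v * γ := by
  have hvi : T.Anc v i.1 := T.anc_trans (T.anc_of_child hc) (T.mem_Ldesc.1 hi).2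
  rw [T.lstar_of_anc hvi, Finset.sum_mul, Finset.sum_filter, Finset.sum_filter]
  refine Finset.sum_congr rfl fun w _ => ?_
  by_cases hwr : w = T.root
  · subst hwr
    rw [if_neg (fun h => h rfl), if_neg
      (show ¬ (T.Anc T.root i.1 ∧ ¬ T.Anc T.root v) from fun h => h.2 (T.anc_root v))]
  · rw [if_pos hwr]
    by_cases hw : T.Anc w i.1
    · by_cases hcw : T.Anc c w
      · have hnv : ¬ T.Anc w v := fun h => T.child_not_anc hc (T.anc_trans hcw h)
        rw [if_pos ⟨hw, hnv⟩, hσc w hcw]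
        unfold delta
        rw [if_pos hw]
        ring
      · have hwc : T.Anc w c := (T.anc_comparable hw (T.mem_Ldesc.1 hi).2).resolve_right hcw
        have hwv : T.Anc w v :=
          T.anc_parent_of_ne hc hwc (by rintro rfl; exact hcw (T.anc_refl _))
        rw [hσv w hwv, if_neg
          (show ¬ (T.Anc w i.1 ∧ ¬ T.Anc w v) from fun hcond => hcond.2 hwv)]
        ring
    · rw [if_neg (show ¬ (T.Anc w i.1 ∧ ¬ T.Anc w v) from fun hcond => hw hcond.1)]
      unfold delta
      rw [if_neg hw]
      ring

lemma sqrtCancel {a b m : ℝ} (ha : 0 < a) (hb : 0 < b) (hm : 0 < m) :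
    a * Real.sqrt (b / (a * m)) + b * (- Real.sqrt (a / (b * m))) = 0 := by
  have h1 : a * Real.sqrt (b / (a * m)) = Real.sqrt (a * b / m) := by
    nth_rewrite 1 [← Real.sqrt_sq ha.le]
    rw [← Real.sqrt_mul (sq_nonneg a)]
    congr 1
    field_simp
  have h2 : b * Real.sqrt (a / (b * m)) = Real.sqrt (a * b / m) := by
    nth_rewrite 1 [← Real.sqrt_sq hb.le]
    rw [← Real.sqrt_mul (sq_nonneg b)]
    congr 1
    field_simp
  rw [mul_neg, h1, h2]
  ring

lemma key (ℓ : Fin T.n → ℝ) (φ : Fin T.n → T.Leaf → ℝ) (hφ : T.IsHaarLike φ)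
    (v : Fin T.n) (hv : v ∈ T.internal) (i : T.Leaf) :
    (T.cov ℓ).mulVec (φ v) i = T.lstar ℓ i.1 v * φ v i := by
  rw [T.mulVec_cov]
  by_cases hvr : v = T.root
  · subst hvr
    have hσ : ∀ w, (∑ j : T.Leaf, T.delta w j * φ T.root j)
        = ((T.Ldesc w).card : ℝ) * (1 / Real.sqrt ((T.leaves.card : ℝ))) := by
      intro w
      rw [T.delta_sum w (fun _ => 1 / Real.sqrt ((T.leaves.card : ℝ))) _ (fun j => hφ.1 j),
        Finset.sum_const, nsmul_eq_mul]
    rw [hφ.1 i, T.lstar_of_anc (T.anc_root i.1), Finset.sum_mul, Finset.sum_filter,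
      Finset.sum_filter]
    refine Finset.sum_congr rfl fun w _ => ?_
    rw [hσ w]
    by_cases hwr : w = T.root
    · subst hwr
      simp [T.anc_refl]
    · by_cases hw : T.Anc w i.1
      · have hnr : ¬ T.Anc w T.root := fun hh => hwr (T.anc_root_iff.1 hh)
        rw [if_pos hwr, if_pos ⟨hw, hnr⟩]
        unfold delta
        rw [if_pos hw]
        ring
      · rw [if_pos hwr, if_neg (fun hc => hw hc.1)]
        unfold delta
        rw [if_neg hw]
        ring
  · obtain ⟨c₀, c₁, hcne, hch, hval⟩ := hφ.2 v hv hvr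
    have hc₀ : c₀ ∈ T.children v := by rw [hch]; exact Finset.mem_insert_self _ _
    have hc₁ : c₁ ∈ T.children v := by
      rw [hch]; exact Finset.mem_insert_of_mem (Finset.mem_singleton_self _)
    have hdisj := T.children_disjoint hc₀ hc₁ hcne
    have ha : (0:ℝ) < ((T.Ldesc c₀).card : ℝ) := by
      exact_mod_cast Finset.card_pos.2 (T.Ldesc_nonempty c₀)
    have hb : (0:ℝ) < ((T.Ldesc c₁).card : ℝ) := by
      exact_mod_cast Finset.card_pos.2 (T.Ldesc_nonempty c₁)
    have hm : (0:ℝ) < ((T.Ldesc v).card : ℝ) := by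
      exact_mod_cast Finset.card_pos.2 (T.Ldesc_nonempty v)
    have hσ : ∀ w, (∑ j : T.Leaf, T.delta w j * φ v j)
        = ((T.Ldesc w ∩ T.Ldesc c₀).card : ℝ) *
            Real.sqrt (((T.Ldesc c₁).card : ℝ) /
              (((T.Ldesc c₀).card : ℝ) * ((T.Ldesc v).card : ℝ)))
          + ((T.Ldesc w ∩ T.Ldesc c₁).card : ℝ) *
            (- Real.sqrt (((T.Ldesc c₀).card : ℝ) /
              (((T.Ldesc c₁).card : ℝ) * ((T.Ldesc v).card : ℝ)))) := by
      intro w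
      rw [T.delta_sum w (fun y =>
          if y ∈ T.Ldesc c₀ then
            Real.sqrt (((T.Ldesc c₁).card : ℝ) /
              (((T.Ldesc c₀).card : ℝ) * ((T.Ldesc v).card : ℝ)))
          else if y ∈ T.Ldesc c₁ then
            - Real.sqrt (((T.Ldesc c₀).card : ℝ) /
              (((T.Ldesc c₁).card : ℝ) * ((T.Ldesc v).card : ℝ)))
          else 0) _ (fun j => hval j)]
      exact T.sum_indicator_pair _ _ _ hdisj _ _
    have hσv : ∀ w, T.Anc w v → (∑ j : T.Leaf, T.delta w j * φ v j) = 0 := by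
      intro w hwv
      rw [hσ w]
      have e0 : T.Ldesc w ∩ T.Ldesc c₀ = T.Ldesc c₀ :=
        Finset.inter_eq_right.2 (T.Ldesc_subset (T.anc_trans hwv (T.anc_of_child hc₀)))
      have e1 : T.Ldesc w ∩ T.Ldesc c₁ = T.Ldesc c₁ :=
        Finset.inter_eq_right.2 (T.Ldesc_subset (T.anc_trans hwv (T.anc_of_child hc₁)))
      rw [e0, e1]
      exact sqrtCancel ha hb hm
    by_cases h₀ : i.1 ∈ T.Ldesc c₀
    · have hφi : φ v i = Real.sqrt (((T.Ldesc c₁).card : ℝ) /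
          (((T.Ldesc c₀).card : ℝ) * ((T.Ldesc v).card : ℝ))) := by
        rw [hval i, if_pos h₀]
      rw [hφi]
      refine T.sum_key v c₀ hc₀ ℓ _ _ ?_ hσv i h₀
      intro w hcw
      rw [hσ w]
      have e0 : T.Ldesc w ∩ T.Ldesc c₀ = T.Ldesc w :=
        Finset.inter_eq_left.2 (T.Ldesc_subset hcw)
      have e1 : T.Ldesc w ∩ T.Ldesc c₁ = ∅ := by
        rw [Finset.eq_empty_iff_forall_notMem]
        intro x hx
        rw [Finset.mem_inter] at hx
        exact hdisj x (T.Ldesc_subset hcw hx.1) hx.2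
      rw [e0, e1]
      simp
    · by_cases h₁ : i.1 ∈ T.Ldesc c₁
      · have hφi : φ v i = - Real.sqrt (((T.Ldesc c₀).card : ℝ) /
            (((T.Ldesc c₁).card : ℝ) * ((T.Ldesc v).card : ℝ))) := by
          rw [hval i, if_neg h₀, if_pos h₁]
        rw [hφi]
        refine T.sum_key v c₁ hc₁ ℓ _ _ ?_ hσv i h₁
        intro w hcw
        rw [hσ w]
        have e0 : T.Ldesc w ∩ T.Ldesc c₀ = ∅ := by
          rw [Finset.eq_empty_iff_forall_notMem]
          intro x hx
          rw [Finset.mem_inter] at hx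
          exact hdisj x hx.2 (T.Ldesc_subset hcw hx.1)
        have e1 : T.Ldesc w ∩ T.Ldesc c₁ = T.Ldesc w :=
          Finset.inter_eq_left.2 (T.Ldesc_subset hcw)
        rw [e0, e1]
        simp
      · have hφi : φ v i = 0 := by rw [hval i, if_neg h₀, if_neg h₁]
        rw [hφi, mul_zero]
        apply Finset.sum_eq_zero
        intro w _
        by_cases hw : T.Anc w i.1
        · by_cases hwv : T.Anc w v
          · rw [hσv w hwv]; ring
          · have hnot : ¬ T.Anc v i.1 := by
              intro hvi
              obtain ⟨c, hcmem, hci⟩ := T.exists_child_anc hvi (T.leaf_ne_internal hv i)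
              rw [hch] at hcmem
              rcases Finset.mem_insert.1 hcmem with rfl | hcm
              · exact h₀ (T.mem_Ldesc.2 ⟨i.2, hci⟩)
              · rw [Finset.mem_singleton] at hcm
                rw [hcm] at hci
                exact h₁ (T.mem_Ldesc.2 ⟨i.2, hci⟩)
            have hnc₀ : ¬ T.Anc c₀ w := fun h =>
              hnot (T.anc_trans (T.anc_trans (T.anc_of_child hc₀) h) hw)
            have hnc₁ : ¬ T.Anc c₁ w := fun h =>
              hnot (T.anc_trans (T.anc_trans (T.anc_of_child hc₁) h) hw)
            have e0 : T.Ldesc w ∩ T.Ldesc c₀ = ∅ := by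
              rw [Finset.eq_empty_iff_forall_notMem]
              intro x hx
              rw [Finset.mem_inter, mem_Ldesc, mem_Ldesc] at hx
              rcases T.anc_comparable hx.1.2 hx.2.2 with hcomp | hcomp
              · exact hwv (T.anc_parent_of_ne hc₀ hcomp
                  (by rintro rfl; exact hnc₀ (T.anc_refl _)))
              · exact hnc₀ hcomp
            have e1 : T.Ldesc w ∩ T.Ldesc c₁ = ∅ := by
              rw [Finset.eq_empty_iff_forall_notMem]
              intro x hx
              rw [Finset.mem_inter, mem_Ldesc, mem_Ldesc] at hx
              rcases T.anc_comparable hx.1.2 hx.2.2 with hcomp | hcomp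
              · exact hwv (T.anc_parent_of_ne hc₁ hcomp
                  (by rintro rfl; exact hnc₁ (T.anc_refl _)))
              · exact hnc₁ hcomp
            rw [hσ w, e0, e1]
            simp
        · unfold delta
          rw [if_neg hw]
          ring

lemma phi_ne (φ : Fin T.n → T.Leaf → ℝ) (hφ : T.IsHaarLike φ) (v : Fin T.n)
    (hv : v ∈ T.internal) (i : T.Leaf) (hi : i.1 ∈ T.Ldesc v) : φ v i ≠ 0 := by
  by_cases hvr : v = T.root
  · subst hvr
    rw [hφ.1 i]
    have hpos : (0:ℝ) < (T.leaves.card : ℝ) := by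
      exact_mod_cast Finset.card_pos.2 ⟨i.1, i.2⟩
    exact one_div_ne_zero (ne_of_gt (Real.sqrt_pos.2 hpos))
  · obtain ⟨c₀, c₁, hcne, hch, hval⟩ := hφ.2 v hv hvr
    have hc₀ : c₀ ∈ T.children v := by rw [hch]; exact Finset.mem_insert_self _ _
    have hc₁ : c₁ ∈ T.children v := by
      rw [hch]; exact Finset.mem_insert_of_mem (Finset.mem_singleton_self _)
    have hdisj := T.children_disjoint hc₀ hc₁ hcne
    have ha : (0:ℝ) < ((T.Ldesc c₀).card : ℝ) := by
      exact_mod_cast Finset.card_pos.2 (T.Ldesc_nonempty c₀)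
    have hb : (0:ℝ) < ((T.Ldesc c₁).card : ℝ) := by
      exact_mod_cast Finset.card_pos.2 (T.Ldesc_nonempty c₁)
    have hm : (0:ℝ) < ((T.Ldesc v).card : ℝ) := by
      exact_mod_cast Finset.card_pos.2 (T.Ldesc_nonempty v)
    obtain ⟨c, hcmem, hci⟩ := T.exists_child_anc (T.mem_Ldesc.1 hi).2 (T.leaf_ne_internal hv i)
    rw [hch] at hcmem
    rw [hval i]
    rcases Finset.mem_insert.1 hcmem with rfl | hcm
    · rw [if_pos (T.mem_Ldesc.2 ⟨i.2, hci⟩)]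
      exact ne_of_gt (Real.sqrt_pos.2 (div_pos hb (mul_pos ha hm)))
    · rw [Finset.mem_singleton] at hcm
      rw [hcm] at hci
      have hmem1 : i.1 ∈ T.Ldesc c₁ := T.mem_Ldesc.2 ⟨i.2, hci⟩
      have hnot0 : i.1 ∉ T.Ldesc c₀ := fun h => hdisj _ h hmem1
      rw [if_neg hnot0, if_pos hmem1]
      exact neg_ne_zero.2 (ne_of_gt (Real.sqrt_pos.2 (div_pos ha (mul_pos hb hm))))

lemma phi_zero (φ : Fin T.n → T.Leaf → ℝ) (hφ : T.IsHaarLike φ) (v : Fin T.n)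
    (hv : v ∈ T.internal) (hvr : v ≠ T.root) (i : T.Leaf) (hi : i.1 ∉ T.Ldesc v) :
    φ v i = 0 := by
  obtain ⟨c₀, c₁, hcne, hch, hval⟩ := hφ.2 v hv hvr
  have hc₀ : c₀ ∈ T.children v := by rw [hch]; exact Finset.mem_insert_self _ _
  have hc₁ : c₁ ∈ T.children v := by
    rw [hch]; exact Finset.mem_insert_of_mem (Finset.mem_singleton_self _)
  have h0 : i.1 ∉ T.Ldesc c₀ := fun h => hi (T.Ldesc_subset (T.anc_of_child hc₀) h)
  have h1 : i.1 ∉ T.Ldesc c₁ := fun h => hi (T.Ldesc_subset (T.anc_of_child hc₁) h)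
  rw [hval i, if_neg h0, if_neg h1]

end RTree

/-- `φ_v` is an eigenvector of `S` iff `T` is trace-balanced at `v`, in which case the
eigenvalue is `ℓ*(i,v)` for any leaf `i ∈ L(v)`. -/
theorem haarLike_eigenvector_iff (T : RTree) (hT : T.IsORB) (ℓ : Fin T.n → ℝ)
    (hℓ : ∀ v, 0 ≤ ℓ v) (hℓpos : ∀ v, T.IsLeaf v → 0 < ℓ v)
    (φ : Fin T.n → T.Leaf → ℝ) (hφ : T.IsHaarLike φ)
    (v : Fin T.n) (hv : v ∈ T.internal) :
    ((∃ μ : ℝ, (T.cov ℓ).mulVec (φ v) = μ • φ v) ↔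
      ∀ i ∈ T.Ldesc v, ∀ j ∈ T.Ldesc v, T.lstar ℓ i v = T.lstar ℓ j v) ∧
    ((∀ i ∈ T.Ldesc v, ∀ j ∈ T.Ldesc v, T.lstar ℓ i v = T.lstar ℓ j v) →
      ∀ i ∈ T.Ldesc v, (T.cov ℓ).mulVec (φ v) = T.lstar ℓ i v • φ v) := by
  have main2 : (∀ i ∈ T.Ldesc v, ∀ j ∈ T.Ldesc v, T.lstar ℓ i v = T.lstar ℓ j v) →
      ∀ i ∈ T.Ldesc v, (T.cov ℓ).mulVec (φ v) = T.lstar ℓ i v • φ v := by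
    intro hbal i hi
    funext j
    rw [T.key ℓ φ hφ v hv j, Pi.smul_apply, smul_eq_mul]
    by_cases hj : j.1 ∈ T.Ldesc v
    · rw [hbal j.1 hj i hi]
    · by_cases hvr : v = T.root
      · exact absurd (T.mem_Ldesc.2 ⟨j.2, hvr ▸ T.anc_root j.1⟩) hj
      · rw [T.phi_zero φ hφ v hv hvr j hj]
        ring
  refine ⟨⟨?_, ?_⟩, main2⟩
  · rintro ⟨μ, hμ⟩ i hi j hj
    have hkey : ∀ x : T.Leaf, x.1 ∈ T.Ldesc v → T.lstar ℓ x.1 v = μ := by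
      intro x hx
      have h1 := congrFun hμ x
      rw [T.key ℓ φ hφ v hv x, Pi.smul_apply, smul_eq_mul] at h1
      exact mul_right_cancel₀ (T.phi_ne φ hφ v hv x hx) h1
    rw [hkey ⟨i, (T.mem_Ldesc.1 hi).1⟩ hi, hkey ⟨j, (T.mem_Ldesc.1 hj).1⟩ hj]
  · intro hbal
    obtain ⟨i, hi⟩ := T.Ldesc_nonempty v
    exact ⟨T.lstar ℓ i v, main2 hbal i hi⟩
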